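/- For the CHSH game with uniform inputs, there exists a two-party quantum strategy with q_1 = q_2 = 4 (ququarts) whose noiseless expected utility (winning probability) equals cos²(π/8) and whose ν-noisy expected utility equals (1−ν)·cos²(π/8) + (9/16)·ν for every ν ∈ [0,1]. Since any non-degenerate optimal qubit strategy has ν-noisy expected utility (1−ν)·cos²(π/8) + ν/2, the ququart strategy strictly exceeds it for every ν > 0; hence under depolarizing noise, increasing the local dimension can strictly increase the attainable expected utility. -/

import Mathlib

open scoped BigOperators

namespace TC

/-- A behavior: a conditional probability distribution over joint decisions given
joint observations. -/
def IsBehavior {n : ℕ} {O D : Fin n → Type} [∀ i, Fintype (D i)]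
    (p : (∀ i, O i) → (∀ i, D i) → ℝ) : Prop :=
  (∀ o d, 0 ≤ p o d) ∧ ∀ o, ∑ d, p o d = 1

/-- The behavior of a deterministic strategy `f`. -/
def detBehavior {n : ℕ} {O D : Fin n → Type} [∀ i, DecidableEq (D i)]
    (f : ∀ i, O i → D i) : (∀ i, O i) → (∀ i, D i) → ℝ :=
  fun o d => ∏ i, if d i = f i (o i) then (1 : ℝ) else 0

/-- Expected utility of a behavior `p` with respect to a weighted utility array `w`. -/
def expUtility {n : ℕ} {O D : Fin n → Type} [∀ i, Fintype (O i)] [∀ i, Fintype (D i)]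
    (w p : (∀ i, O i) → (∀ i, D i) → ℝ) : ℝ :=
  ∑ o, ∑ d, p o d * w o d

/-- A quantum strategy: a finite dimension for each party, a projective measurement
(indexed by decisions) for each party and observation, and a shared unit state vector. -/
structure QStrategy {n : ℕ} (O D : Fin n → Type) [∀ i, Fintype (O i)] [∀ i, Fintype (D i)] where
  dim : Fin n → ℕ
  dim_pos : ∀ i, 0 < dim i
  proj : ∀ i, O i → D i → Matrix (Fin (dim i)) (Fin (dim i)) ℂ
  proj_herm : ∀ i o d, (proj i o d).IsHermitian
  proj_idem : ∀ i o d, proj i o d * proj i o d = proj i o d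
  proj_orth : ∀ i o d d', d ≠ d' → proj i o d * proj i o d' = 0
  proj_sum : ∀ i o, ∑ d, proj i o d = 1
  state : (∀ i, Fin (dim i)) → ℂ
  state_norm : ∑ x, Complex.normSq (state x) = 1

/-- The behavior determined by a family of "projectors" (measurement operators, one for each
party, observation and decision) and a shared state:
`p(d|o) = ⟨ψ, (⊗ᵢ Πᵢ^{(dᵢ|oᵢ)}) ψ⟩`. -/
noncomputable def projBehavior {n : ℕ} {O D : Fin n → Type} (dim : Fin n → ℕ)
    (proj : ∀ i, O i → D i → Matrix (Fin (dim i)) (Fin (dim i)) ℂ)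
    (ψ : (∀ i, Fin (dim i)) → ℂ) : (∀ i, O i) → (∀ i, D i) → ℝ :=
  fun o d =>
    (∑ x, ∑ y, (starRingEnd ℂ) (ψ x) * (∏ i, proj i (o i) (d i) (x i) (y i)) * ψ y).re

/-- The quantum behavior of a quantum strategy. -/
noncomputable def QStrategy.behavior {n : ℕ} {O D : Fin n → Type}
    [∀ i, Fintype (O i)] [∀ i, Fintype (D i)] (S : QStrategy O D) :
    (∀ i, O i) → (∀ i, D i) → ℝ :=
  projBehavior S.dim S.proj S.state

/-- The classical value: the maximum expected utility over deterministic strategies. -/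
noncomputable def cValue {n : ℕ} {O D : Fin n → Type} [∀ i, Fintype (O i)] [∀ i, Fintype (D i)]
    [∀ i, DecidableEq (D i)] (w : (∀ i, O i) → (∀ i, D i) → ℝ) : ℝ :=
  ⨆ f : ∀ i, O i → D i, expUtility w (detBehavior f)

/-- The quantum value: the supremum of expected utilities over all quantum strategies
(of all finite dimensions). -/
noncomputable def qValue {n : ℕ} {O D : Fin n → Type} [∀ i, Fintype (O i)] [∀ i, Fintype (D i)]
    (w : (∀ i, O i) → (∀ i, D i) → ℝ) : ℝ :=
  sSup {x : ℝ | ∃ S : QStrategy O D, x = expUtility w S.behavior}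

/-- The gap `g(w) = q*(w) − c*(w)`. -/
noncomputable def gap {n : ℕ} {O D : Fin n → Type} [∀ i, Fintype (O i)] [∀ i, Fintype (D i)]
    [∀ i, DecidableEq (D i)] (w : (∀ i, O i) → (∀ i, D i) → ℝ) : ℝ :=
  qValue w - cValue w

/-- `w` is gapped if its gap is positive. -/
def Gapped {n : ℕ} {O D : Fin n → Type} [∀ i, Fintype (O i)] [∀ i, Fintype (D i)]
    [∀ i, DecidableEq (D i)] (w : (∀ i, O i) → (∀ i, D i) → ℝ) : Prop :=
  0 < gap w

/-- A quantum strategy is degenerate if some party uses a trivial (zero or identity)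
measurement operator. -/
def QStrategy.Degenerate {n : ℕ} {O D : Fin n → Type}
    [∀ i, Fintype (O i)] [∀ i, Fintype (D i)] (S : QStrategy O D) : Prop :=
  ∃ i o d, S.proj i o d = 0 ∨ S.proj i o d = 1

/-- A classical behavior: a convex combination of deterministic behaviors. -/
def IsClassicalBehavior {n : ℕ} {O D : Fin n → Type}
    [∀ i, Fintype (O i)] [∀ i, DecidableEq (O i)] [∀ i, Fintype (D i)] [∀ i, DecidableEq (D i)]
    (p : (∀ i, O i) → (∀ i, D i) → ℝ) : Prop :=
  ∃ μ : (∀ i, O i → D i) → ℝ, (∀ f, 0 ≤ μ f) ∧ ∑ f, μ f = 1 ∧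
    ∀ o d, p o d = ∑ f, μ f * detBehavior f o d

/-- The lossy behavior built from a family of measurement operators, a shared state, a fallback
deterministic strategy `f`, and efficiencies `η`: the sum over subsets `T` of parties that
experience loss, weighted by the loss probabilities, of the behavior of the `T`-semiclassical
strategy (parties in `T` use the trivial projectors implementing `f` locally). -/
noncomputable def lossyProjBehavior {n : ℕ} {O D : Fin n → Type} [∀ i, DecidableEq (D i)]
    (dim : Fin n → ℕ) (proj : ∀ i, O i → D i → Matrix (Fin (dim i)) (Fin (dim i)) ℂ)
    (ψ : (∀ i, Fin (dim i)) → ℂ) (f : ∀ i, O i → D i) (η : Fin n → ℝ) :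
    (∀ i, O i) → (∀ i, D i) → ℝ :=
  fun o d => ∑ T : Finset (Fin n),
    ((∏ i ∈ T, (1 - η i)) * ∏ i ∈ Tᶜ, η i) *
      projBehavior dim
        (fun i oi di =>
          if i ∈ T then (if di = f i oi then (1 : Matrix (Fin (dim i)) (Fin (dim i)) ℂ) else 0)
          else proj i oi di)
        ψ o d

/-- The `{ηᵢ}`-lossy behavior of a pair `(S_q, S_d)` of a quantum strategy and a fallback
deterministic strategy. -/
noncomputable def lossyBehavior {n : ℕ} {O D : Fin n → Type}
    [∀ i, Fintype (O i)] [∀ i, Fintype (D i)] [∀ i, DecidableEq (D i)]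
    (S : QStrategy O D) (f : ∀ i, O i → D i) (η : Fin n → ℝ) :
    (∀ i, O i) → (∀ i, D i) → ℝ :=
  lossyProjBehavior S.dim S.proj S.state f η

/-- The `ν`-noisy behavior of a quantum strategy:
`p_o^d(ν) = tr[(⊗ᵢ Πᵢ^{(dᵢ|oᵢ)}) ((1−ν)|ψ⟩⟨ψ| + ν π)]` with `π` the maximally mixed state. -/
noncomputable def noisyBehavior {n : ℕ} {O D : Fin n → Type}
    [∀ i, Fintype (O i)] [∀ i, Fintype (D i)] (S : QStrategy O D) (ν : ℝ) :
    (∀ i, O i) → (∀ i, D i) → ℝ :=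
  fun o d =>
    (∑ x, ∑ y, (∏ i, S.proj i (o i) (d i) (x i) (y i)) *
      ((1 - ν) * (S.state y * (starRingEnd ℂ) (S.state x)) +
        ((ν : ℂ) / (∏ i, (S.dim i : ℂ))) * (if x = y then 1 else 0))).re

end TC

namespace TC

/-- The CHSH weighted utility array with uniform inputs:
`w(o;d) = (1/4)·χ[(o₁∧o₂) = d₁⊕d₂]`. -/
noncomputable def wCHSH : (Fin 2 → Bool) → (Fin 2 → Bool) → ℝ :=
  fun o d => if (o 0 && o 1) = (d 0 != d 1) then 1/4 else 0

end TC


noncomputable def p4r (a b : ℝ) (d : Bool) (i j : Fin 4) : ℝ :=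
  if (i = 0 ∨ i = 1) ∧ (j = 0 ∨ j = 1) then
    (if i = j then 1/2 else 0) + (if d then -1 else 1) * (if i = j then (if i = 0 then a else -a) else b)
  else if d = false ∧ i = j then 1 else 0

noncomputable def P4 (a b : ℝ) (d : Bool) : Matrix (Fin 4) (Fin 4) ℂ :=
  Matrix.of fun i j => ((p4r a b d i j : ℝ) : ℂ)

lemma hC_of (a b : ℝ) (hab : a^2 + b^2 = 1/4) : (a:ℂ)^2 + (b:ℂ)^2 = 1/4 := by
  rw [show ((1:ℂ)/4) = ((1/4 : ℝ) : ℂ) by norm_num, ← hab]; push_cast; ring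

lemma P4_herm (a b : ℝ) (d : Bool) : (P4 a b d).IsHermitian := by
  rw [Matrix.IsHermitian]
  ext i j
  fin_cases i <;> fin_cases j <;> cases d <;>
    simp [P4, p4r, Matrix.conjTranspose_apply]

lemma P4_idem (a b : ℝ) (hab : a^2 + b^2 = 1/4) (d : Bool) :
    P4 a b d * P4 a b d = P4 a b d := by
  have hC := hC_of a b hab
  cases d <;>
  · ext i j
    fin_cases i <;> fin_cases j <;>
      simp [P4, p4r, Matrix.mul_apply, Fin.sum_univ_four] <;>
      first
        | ring1
        | linear_combination hC
        | linear_combination -hC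

lemma P4_orth (a b : ℝ) (hab : a^2 + b^2 = 1/4) (d d' : Bool) (h : d ≠ d') :
    P4 a b d * P4 a b d' = 0 := by
  have hC := hC_of a b hab
  cases d <;> cases d' <;> [skip; skip; skip; skip] <;> first
    | exact absurd rfl h
    | · ext i j
        fin_cases i <;> fin_cases j <;>
          simp [P4, p4r, Matrix.mul_apply, Fin.sum_univ_four] <;>
          first
            | ring1
            | linear_combination hC
            | linear_combination -hC

lemma P4_sum (a b : ℝ) : ∑ d, P4 a b d = 1 := by
  rw [Fintype.sum_bool]
  ext i j
  fin_cases i <;> fin_cases j <;>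
    simp [P4, p4r, Matrix.one_apply] <;> first | ring1 | skip

lemma P4_trace (a b : ℝ) (d : Bool) :
    (P4 a b d).trace = (((if d then 1 else 3 : ℝ)) : ℂ) := by
  cases d <;>
    simp [P4, p4r, Matrix.trace, Matrix.diag, Fin.sum_univ_four] <;>
    first | ring1 | skip


noncomputable def psi4 : (∀ _ : Fin 2, Fin 4) → ℂ :=
  fun x => if x 0 = x 1 ∧ (x 0 = 0 ∨ x 0 = 1) then (((Real.sqrt 2)⁻¹ : ℝ) : ℂ) else 0

lemma psi4_eq_zero {x : Fin 2 → Fin 4} (h0 : x ≠ ![0,0]) (h1 : x ≠ ![1,1]) : psi4 x = 0 := by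
  unfold psi4
  rw [if_neg]
  rintro ⟨he, h01 | h01⟩
  · exact h0 (funext fun i => by fin_cases i <;> simp [h01, ← he])
  · exact h1 (funext fun i => by fin_cases i <;> simp [h01, ← he])

lemma psi4_00 : psi4 ![0,0] = (((Real.sqrt 2)⁻¹ : ℝ) : ℂ) := by simp [psi4]
lemma psi4_11 : psi4 ![1,1] = (((Real.sqrt 2)⁻¹ : ℝ) : ℂ) := by simp [psi4]

lemma psi4_norm : ∑ x, Complex.normSq (psi4 x) = 1 := by
  rw [Fintype.sum_eq_add ![0,0] ![1,1] (by decide)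
    (fun x hx => by rw [psi4_eq_zero hx.1 hx.2]; simp)]
  rw [psi4_00, psi4_11, Complex.normSq_ofReal]
  have h2 : Real.sqrt 2 * Real.sqrt 2 = 2 := Real.mul_self_sqrt (by norm_num)
  field_simp
  nlinarith [h2]

namespace TC

lemma sum_piBool {M : Type*} [AddCommMonoid M] (f : (Fin 2 → Bool) → M) :
    ∑ x, f x = f ![false,false] + f ![false,true] + f ![true,false] + f ![true,true] := by
  rw [show (Finset.univ : Finset (Fin 2 → Bool)) =
      {![false,false], ![false,true], ![true,false], ![true,true]} by decide]
  rw [Finset.sum_insert (by decide), Finset.sum_insert (by decide),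
      Finset.sum_insert (by decide), Finset.sum_singleton]
  simp only [add_assoc]

lemma projBehavior_psi4 (proj : ∀ i : Fin 2, Bool → Bool → Matrix (Fin 4) (Fin 4) ℂ)
    (o d : Fin 2 → Bool) :
    projBehavior (fun _ => 4) proj psi4 o d =
      ((2⁻¹ : ℂ) * (proj 0 (o 0) (d 0) 0 0 * proj 1 (o 1) (d 1) 0 0 +
              proj 0 (o 0) (d 0) 0 1 * proj 1 (o 1) (d 1) 0 1 +
              proj 0 (o 0) (d 0) 1 0 * proj 1 (o 1) (d 1) 1 0 +
              proj 0 (o 0) (d 0) 1 1 * proj 1 (o 1) (d 1) 1 1)).re := by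
  have hr : ((((Real.sqrt 2)⁻¹ : ℝ)) : ℂ) * (((Real.sqrt 2)⁻¹ : ℝ) : ℂ) = 2⁻¹ := by
    rw [← Complex.ofReal_mul, ← mul_inv, Real.mul_self_sqrt (by norm_num : (0:ℝ) ≤ 2)]
    push_cast; norm_num
  unfold projBehavior
  rw [Fintype.sum_eq_add ![0,0] ![1,1] (by decide)
    (fun x hx => by simp [psi4_eq_zero hx.1 hx.2])]
  rw [Fintype.sum_eq_add (f := fun y => (starRingEnd ℂ) (psi4 ![0,0]) *
      (∏ i, proj i (o i) (d i) (![0,0] i) (y i)) * psi4 y) ![0,0] ![1,1] (by decide)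
    (fun y hy => by simp [psi4_eq_zero hy.1 hy.2])]
  rw [Fintype.sum_eq_add (f := fun y => (starRingEnd ℂ) (psi4 ![1,1]) *
      (∏ i, proj i (o i) (d i) (![1,1] i) (y i)) * psi4 y) ![0,0] ![1,1] (by decide)
    (fun y hy => by simp [psi4_eq_zero hy.1 hy.2])]
  rw [psi4_00, psi4_11, Complex.conj_ofReal]
  congr 1
  simp only [Fin.prod_univ_two, Matrix.cons_val_zero, Matrix.cons_val_one, Matrix.head_cons]
  linear_combination (proj 0 (o 0) (d 0) 0 0 * proj 1 (o 1) (d 1) 0 0 +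
              proj 0 (o 0) (d 0) 0 1 * proj 1 (o 1) (d 1) 0 1 +
              proj 0 (o 0) (d 0) 1 0 * proj 1 (o 1) (d 1) 1 0 +
              proj 0 (o 0) (d 0) 1 1 * proj 1 (o 1) (d 1) 1 1) * hr

end TC

namespace TC

noncomputable def aA (o : Bool) : ℝ := if o then 0 else 1/2
noncomputable def bA (o : Bool) : ℝ := if o then 1/2 else 0
noncomputable def aB (_ : Bool) : ℝ := Real.sqrt 2 / 4
noncomputable def bB (o : Bool) : ℝ := if o then -(Real.sqrt 2/4) else Real.sqrt 2/4

lemma habA (o : Bool) : aA o ^ 2 + bA o ^ 2 = 1/4 := by cases o <;> norm_num [aA, bA]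

lemma habB (o : Bool) : aB o ^ 2 + bB o ^ 2 = 1/4 := by
  have h2 : Real.sqrt 2 ^ 2 = 2 := Real.sq_sqrt (by norm_num)
  cases o <;> simp [aB, bB] <;> linear_combination h2 / 8

noncomputable def Sq : QStrategy (fun _ : Fin 2 => Bool) (fun _ : Fin 2 => Bool) where
  dim := fun _ => 4
  dim_pos := fun _ => by norm_num
  proj := fun i o d => if i = 0 then P4 (aA o) (bA o) d else P4 (aB o) (bB o) d
  proj_herm := fun i o d => by
    split <;> exact P4_herm _ _ _
  proj_idem := fun i o d => by
    split
    · exact P4_idem _ _ (habA o) d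
    · exact P4_idem _ _ (habB o) d
  proj_orth := fun i o d d' h => by
    split
    · exact P4_orth _ _ (habA o) _ _ h
    · exact P4_orth _ _ (habB o) _ _ h
  proj_sum := fun i o => by
    split <;> exact P4_sum _ _
  state := psi4
  state_norm := psi4_norm

lemma re_collapse (x1 x2 x3 x4 y1 y2 y3 y4 : ℝ) :
    ((2⁻¹:ℂ) * ((x1:ℂ)*(y1:ℂ) + (x2:ℂ)*(y2:ℂ) + (x3:ℂ)*(y3:ℂ) + (x4:ℂ)*(y4:ℂ))).re
      = 2⁻¹ * (x1*y1 + x2*y2 + x3*y3 + x4*y4) := by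
  rw [show (2⁻¹:ℂ) = ((2⁻¹:ℝ):ℂ) by norm_num]
  norm_cast

lemma Sq_behavior_eval (o d : Fin 2 → Bool) :
    Sq.behavior o d = 2⁻¹ *
      (p4r (aA (o 0)) (bA (o 0)) (d 0) 0 0 * p4r (aB (o 1)) (bB (o 1)) (d 1) 0 0 +
       p4r (aA (o 0)) (bA (o 0)) (d 0) 0 1 * p4r (aB (o 1)) (bB (o 1)) (d 1) 0 1 +
       p4r (aA (o 0)) (bA (o 0)) (d 0) 1 0 * p4r (aB (o 1)) (bB (o 1)) (d 1) 1 0 +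
       p4r (aA (o 0)) (bA (o 0)) (d 0) 1 1 * p4r (aB (o 1)) (bB (o 1)) (d 1) 1 1) := by
  show projBehavior (fun _ => 4) (fun i o d => if i = 0 then P4 (aA o) (bA o) d else P4 (aB o) (bB o) d) psi4 o d = _
  rw [projBehavior_psi4]
  simp only [Sq, if_pos rfl, if_neg (by decide : ¬ (1 : Fin 2) = 0), P4, Matrix.of_apply]
  exact re_collapse _ _ _ _ _ _ _ _

lemma Sq_exp : expUtility wCHSH Sq.behavior = 1/2 + Real.sqrt 2 / 4 := by
  unfold expUtility
  rw [sum_piBool]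
  simp only [sum_piBool, Sq_behavior_eval]
  norm_num [wCHSH, p4r, aA, bA, aB, bB, Matrix.cons_val_zero, Matrix.cons_val_one,
    Matrix.head_cons]
  ring

end TC

namespace TC

lemma noisyBehavior_eq {n : ℕ} {O D : Fin n → Type} [∀ i, Fintype (O i)] [∀ i, Fintype (D i)]
    (S : QStrategy O D) (ν : ℝ) (o : ∀ i, O i) (d : ∀ i, D i) :
    noisyBehavior S ν o d = (1 - ν) * S.behavior o d +
      (ν / ∏ i, (S.dim i : ℝ)) * (∏ i, (S.proj i (o i) (d i)).trace).re := by
  unfold noisyBehavior QStrategy.behavior projBehavior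
  have hD : ((∏ i, (S.dim i : ℂ))) = (((∏ i, (S.dim i : ℝ)) : ℝ) : ℂ) := by push_cast; rfl
  have key : ∀ x y : (∀ i, Fin (S.dim i)), (∏ i, S.proj i (o i) (d i) (x i) (y i)) *
      ((1 - (ν:ℂ)) * (S.state y * (starRingEnd ℂ) (S.state x)) +
        ((ν : ℂ) / (∏ i, (S.dim i : ℂ))) * (if x = y then 1 else 0)) =
      ((1 - ν : ℝ) : ℂ) * ((starRingEnd ℂ) (S.state x) * (∏ i, S.proj i (o i) (d i) (x i) (y i)) * S.state y) +
      (if x = y then ((ν / ∏ i, (S.dim i:ℝ) : ℝ) : ℂ) * (∏ i, S.proj i (o i) (d i) (x i) (y i)) else 0) := by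
    intro x y; rw [hD]; push_cast; split <;> ring
  simp only [key]
  have htr : (∑ x : (∀ i, Fin (S.dim i)), ∏ i, S.proj i (o i) (d i) (x i) (x i))
      = ∏ i, (S.proj i (o i) (d i)).trace := by
    simp only [Matrix.trace, Matrix.diag]
    rw [Finset.prod_univ_sum, Fintype.piFinset_univ]
  simp only [Finset.sum_add_distrib, Finset.sum_ite_eq, Finset.mem_univ, if_true,
    ← Finset.mul_sum]
  rw [Complex.add_re, Complex.re_ofReal_mul, Complex.re_ofReal_mul, htr]

lemma expUtility_noisy {n : ℕ} {O D : Fin n → Type} [∀ i, Fintype (O i)] [∀ i, Fintype (D i)]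
    (w : (∀ i, O i) → (∀ i, D i) → ℝ) (S : QStrategy O D) (ν : ℝ) :
    expUtility w (noisyBehavior S ν) = (1 - ν) * expUtility w S.behavior +
      (ν / ∏ i, (S.dim i : ℝ)) * ∑ o, ∑ d, (∏ i, (S.proj i (o i) (d i)).trace).re * w o d := by
  unfold expUtility
  simp only [noisyBehavior_eq, add_mul, Finset.sum_add_distrib, mul_assoc, ← Finset.mul_sum]

lemma idem2_trace {M : Matrix (Fin 2) (Fin 2) ℂ} (h : M * M = M)
    (h0 : M ≠ 0) (h1 : M ≠ 1) : M.trace = 1 := by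
  have hp : ∀ i j : Fin 2, (M * M) i j = M i j := fun i j => congrFun (congrFun h i) j
  have h00 := hp 0 0; have h01 := hp 0 1; have h10 := hp 1 0; have h11 := hp 1 1
  rw [Matrix.mul_apply, Fin.sum_univ_two] at h00 h01 h10 h11
  rw [Matrix.trace_fin_two]
  by_contra ht
  have hb : M 0 1 = 0 := by
    have hz : M 0 1 * (M 0 0 + M 1 1 - 1) = 0 := by linear_combination h01
    rcases mul_eq_zero.1 hz with hh | hh
    · exact hh
    · exact absurd (by linear_combination hh) ht
  have hc : M 1 0 = 0 := by
    have hz : M 1 0 * (M 0 0 + M 1 1 - 1) = 0 := by linear_combination h10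
    rcases mul_eq_zero.1 hz with hh | hh
    · exact hh
    · exact absurd (by linear_combination hh) ht
  have ha : M 0 0 = 0 ∨ M 0 0 = 1 := by
    have hz : M 0 0 * (M 0 0 - 1) = 0 := by linear_combination h00 - M 1 0 * hb
    rcases mul_eq_zero.1 hz with hh | hh
    · exact Or.inl hh
    · exact Or.inr (by linear_combination hh)
  have hd : M 1 1 = 0 ∨ M 1 1 = 1 := by
    have hz : M 1 1 * (M 1 1 - 1) = 0 := by linear_combination h11 - M 0 1 * hc
    rcases mul_eq_zero.1 hz with hh | hh
    · exact Or.inl hh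
    · exact Or.inr (by linear_combination hh)
  rcases ha with ha | ha <;> rcases hd with hd | hd
  · refine h0 ?_
    ext i j; fin_cases i <;> fin_cases j <;>
      simp_all [Matrix.zero_apply]
  · exact ht (by rw [ha, hd]; ring)
  · exact ht (by rw [ha, hd]; ring)
  · refine h1 ?_
    ext i j; fin_cases i <;> fin_cases j <;>
      simp_all [Matrix.one_apply]

lemma trace_one_of {m : ℕ} (hm : m = 2) (M : Matrix (Fin m) (Fin m) ℂ) (h : M * M = M)
    (h0 : M ≠ 0) (h1 : M ≠ 1) : M.trace = 1 := by
  subst hm; exact idem2_trace h h0 h1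

lemma cos_pi8 : Real.cos (Real.pi/8) ^ 2 = 1/2 + Real.sqrt 2 / 4 := by
  rw [Real.cos_sq, show 2 * (Real.pi/8) = Real.pi/4 by ring, Real.cos_pi_div_four]; ring

end TC

open TC in
/-- for the CHSH game with uniform inputs there is a ququart strategy
(`q₁ = q₂ = 4`) with noiseless expected utility `cos²(π/8)` whose `ν`-noisy expected utility is
`(1−ν)cos²(π/8) + (9/16)ν`; any non-degenerate optimal qubit strategy has `ν`-noisy expected
utility `(1−ν)cos²(π/8) + ν/2`, which is strictly smaller for every `ν > 0`: under depolarizing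
noise, increasing the local dimension can strictly increase the attainable expected utility. -/
theorem ququart_beats_qubit_under_noise :
    (∃ S : QStrategy (fun _ : Fin 2 => Bool) (fun _ : Fin 2 => Bool),
      (∀ i, S.dim i = 4) ∧
      expUtility wCHSH S.behavior = Real.cos (Real.pi / 8) ^ 2 ∧
      ∀ ν ∈ Set.Icc (0 : ℝ) 1,
        expUtility wCHSH (noisyBehavior S ν) =
          (1 - ν) * Real.cos (Real.pi / 8) ^ 2 + (9/16) * ν) ∧
    (∀ S : QStrategy (fun _ : Fin 2 => Bool) (fun _ : Fin 2 => Bool),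
      (∀ i, S.dim i = 2) → ¬ S.Degenerate →
      expUtility wCHSH S.behavior = Real.cos (Real.pi / 8) ^ 2 →
      ∀ ν ∈ Set.Icc (0 : ℝ) 1,
        expUtility wCHSH (noisyBehavior S ν) =
          (1 - ν) * Real.cos (Real.pi / 8) ^ 2 + ν / 2) ∧
    (∀ ν : ℝ, 0 < ν →
      (1 - ν) * Real.cos (Real.pi / 8) ^ 2 + ν / 2 <
        (1 - ν) * Real.cos (Real.pi / 8) ^ 2 + (9/16) * ν) := by
  refine ⟨⟨Sq, fun i => rfl, by rw [Sq_exp, cos_pi8], ?_⟩, ?_, ?_⟩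
  · -- ququart noisy value
    intro ν _
    have hprod : (∏ i, ((Sq.dim i : ℝ))) = 16 := by
      rw [Fin.prod_univ_two]; norm_num [Sq]
    have htr : ∀ o d : Fin 2 → Bool, (∏ i, ((Sq.proj i (o i) (d i)).trace)).re
        = (if d 0 then (1:ℝ) else 3) * (if d 1 then (1:ℝ) else 3) := by
      intro o d
      rw [Fin.prod_univ_two]
      simp only [Sq, eq_self_iff_true, if_true, if_pos rfl,
        if_neg (by decide : ¬(1:Fin 2) = 0)]
      show ((P4 (aA (o 0)) (bA (o 0)) (d 0)).trace * (P4 (aB (o 1)) (bB (o 1)) (d 1)).trace).re = _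
      rw [P4_trace, P4_trace, ← Complex.ofReal_mul, Complex.ofReal_re]
    rw [expUtility_noisy, Sq_exp, hprod, cos_pi8]
    simp only [htr]
    have hsum : (∑ o : Fin 2 → Bool, ∑ d : Fin 2 → Bool,
        ((if d 0 then (1:ℝ) else 3) * (if d 1 then (1:ℝ) else 3)) * wCHSH o d) = 9 := by
      simp only [sum_piBool]
      norm_num [wCHSH, Matrix.cons_val_zero, Matrix.cons_val_one, Matrix.head_cons]
    rw [hsum]; ring
  · -- qubit noisy value
    intro S hdim hnd hopt ν _
    have hnd' : ∀ i o d, S.proj i o d ≠ 0 ∧ S.proj i o d ≠ 1 := by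
      intro i o d
      constructor <;> intro hcon
      · exact hnd ⟨i, o, d, Or.inl hcon⟩
      · exact hnd ⟨i, o, d, Or.inr hcon⟩
    have htr1 : ∀ (i : Fin 2) (o d : Bool), (S.proj i o d).trace = 1 := fun i o d =>
      trace_one_of (hdim i) _ (S.proj_idem i o d) (hnd' i o d).1 (hnd' i o d).2
    have htr : ∀ o d : Fin 2 → Bool, (∏ i, ((S.proj i (o i) (d i)).trace)).re = 1 := by
      intro o d
      rw [Fin.prod_univ_two, htr1, htr1, mul_one, Complex.one_re]
    have hprod : (∏ i, ((S.dim i : ℝ))) = 4 := by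
      rw [Fin.prod_univ_two, hdim 0, hdim 1]; norm_num
    rw [expUtility_noisy, hopt, hprod]
    simp only [htr, one_mul]
    have hsum : (∑ o : Fin 2 → Bool, ∑ d : Fin 2 → Bool, wCHSH o d) = 2 := by
      simp only [sum_piBool]
      norm_num [wCHSH, Matrix.cons_val_zero, Matrix.cons_val_one, Matrix.head_cons]
    rw [hsum]; ring
  · -- strict inequality
    intro ν hν
    have : ν / 2 < (9/16) * ν := by linarith
    linarith
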